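/- For all natural numbers n and m with m ≤ n, the number of m-dimensional subspaces S of (ZMod 2)^n × (ZMod 2)^n satisfying ω(x, y) = 0 for all x, y ∈ S, multiplied by ∏_{a=0}^{m−1} (2^m − 2^a), equals ∏_{a=0}^{m−1} (2^{2n−a} − 2^a). -/

import Mathlib

/-- The binary symplectic form on `(ZMod 2)^n × (ZMod 2)^n`:
`ω((u,v),(u',v')) = u·v' + u'·v` (mod 2). -/
def symp {n : ℕ} (x y : (Fin n → ZMod 2) × (Fin n → ZMod 2)) : ZMod 2 :=
  (∑ i, x.1 i * y.2 i) + (∑ i, y.1 i * x.2 i)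

/-!
Count the linearly independent isotropic `m`-tuples (isotropic frames) in two ways. Each
`m`-dimensional isotropic subspace has `∏_{a<m} (2^m - 2^a)` ordered bases, and these are exactly
the isotropic frames spanning it. On the other hand, appending `x` to an isotropic frame spanning
`W` gives an isotropic frame iff `x ∈ W^⊥ \ W`: here `x ⊥ x` is automatic because `ω` is
alternating. As `W` is isotropic, `W ⊆ W^⊥`, and nondegeneracy gives `dim W^⊥ = 2n - dim W`, so a
frame of length `a` has `2^(2n-a) - 2^a` extensions.
-/

open Module Submodule
open LinearMap (BilinForm)

theorem Nat.card_sigma_of_forall_card_eq {α : Type*} [Finite α] {β : α → Type*}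
    [∀ a, Finite (β a)] {c : ℕ} (h : ∀ a, Nat.card (β a) = c) :
    Nat.card (Σ a, β a) = Nat.card α * c := by
  have := Fintype.ofFinite α
  simp [Nat.card_sigma, h]

instance Submodule.finite_of_finite {R M : Type*} [Semiring R] [AddCommMonoid M] [Module R M]
    [Finite M] : Finite (Submodule R M) :=
  Finite.of_injective _ SetLike.coe_injective

section FiniteField

variable {K V : Type*} [Field K] [Fintype K] [AddCommGroup V] [Module K V] [Finite V]

local notation "q" => Fintype.card K

theorem Submodule.natCard_sdiff_of_le {W W' : Submodule K V} (h : W ≤ W') :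
    Nat.card ↥((W' : Set V) \ W) = q ^ finrank K W' - q ^ finrank K W := by
  rw [Nat.card_coe_set_eq, Set.ncard_sdiff h, ← Nat.card_coe_set_eq, ← Nat.card_coe_set_eq,
    SetLike.coe_sort_coe, SetLike.coe_sort_coe, natCard_eq_pow_finrank (K := K) (V := W'),
    natCard_eq_pow_finrank (K := K) (V := W), Nat.card_eq_fintype_card]

theorem card_linearIndependent_span_eq {k : ℕ} (S : Submodule K V) (hS : finrank K S = k) :
    Nat.card {f : Fin k → V // LinearIndependent K f ∧ span K (Set.range f) = S} =
      ∏ a ∈ Finset.range k, (q ^ k - q ^ a) := by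
  let e : {f : Fin k → V // LinearIndependent K f ∧ span K (Set.range f) = S} ≃
      {f : Fin k → S // LinearIndependent K f} :=
    { toFun f := ⟨fun i => ⟨f.1 i, f.2.2.le (subset_span ⟨i, rfl⟩)⟩, .of_comp S.subtype f.2.1⟩
      invFun f := ⟨S.subtype ∘ f.1, f.2.map' _ S.ker_subtype, by
        have : span K (Set.range f.1) = ⊤ :=
          f.2.span_eq_top_of_card_eq_finrank' (by rw [Fintype.card_fin, hS])
        rw [Set.range_comp, ← map_span, this, map_subtype_top]⟩
      left_inv _ := rfl
      right_inv _ := rfl }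
  rw [Nat.card_congr e, card_linearIndependent hS.ge, hS]
  exact Fin.prod_univ_eq_prod_range (fun a => q ^ k - q ^ a) k

theorem card_linearIndependent_span_mem (𝒮 : Set (Submodule K V)) (k : ℕ) :
    Nat.card {f : Fin k → V // LinearIndependent K f ∧ span K (Set.range f) ∈ 𝒮} =
      Nat.card {S : Submodule K V // finrank K S = k ∧ S ∈ 𝒮} *
        ∏ a ∈ Finset.range k, (q ^ k - q ^ a) := by
  let e : {f : Fin k → V // LinearIndependent K f ∧ span K (Set.range f) ∈ 𝒮} ≃
      Σ S : {S : Submodule K V // finrank K S = k ∧ S ∈ 𝒮},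
        {f : Fin k → V // LinearIndependent K f ∧ span K (Set.range f) = S} :=
    { toFun f := ⟨⟨_, by rw [finrank_span_eq_card f.2.1, Fintype.card_fin], f.2.2⟩, f.1, f.2.1, rfl⟩
      invFun S := ⟨S.2.1, S.2.2.1, by rw [S.2.2.2]; exact S.1.2.2⟩
      left_inv _ := rfl
      right_inv := by
        rintro ⟨⟨S, hS⟩, f, hf, hspan⟩
        obtain rfl : span K (Set.range f) = S := hspan
        rfl }
  rw [Nat.card_congr e,
    Nat.card_sigma_of_forall_card_eq fun S => card_linearIndependent_span_eq _ S.2.1]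

end FiniteField

namespace LinearMap.BilinForm

section CommSemiring

variable {R M : Type*} [CommSemiring R] [AddCommMonoid M] [Module R M] (B : BilinForm R M)

theorem mem_orthogonal_span_iff {s : Set M} {x : M} :
    x ∈ B.orthogonal (span R s) ↔ ∀ y ∈ s, B y x = 0 :=
  span_le (p := LinearMap.ker (B.flip x))

theorem isotropic_span_iff {s : Set M} :
    (∀ x ∈ span R s, ∀ y ∈ span R s, B x y = 0) ↔ ∀ x ∈ s, ∀ y ∈ s, B x y = 0 := by
  refine ⟨fun h x hx y hy => h x (subset_span hx) y (subset_span hy), fun h x hx y hy => ?_⟩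
  have hy' : y ∈ B.orthogonal (span R s) :=
    (B.mem_orthogonal_span_iff).2 fun x hx => (span_le (p := ker (B x))).2 (h x hx) hy
  exact hy' x hx

end CommSemiring

section Field

variable {K V : Type*} [Field K] [AddCommGroup V] [Module K V] (B : BilinForm K V)

def isotropicFrames (k : ℕ) : Set (Fin k → V) :=
  {f | LinearIndependent K f ∧ ∀ i j, B (f i) (f j) = 0}

variable {B}

theorem isotropic_snoc_iff (hB : B.IsAlt) {k : ℕ} {g : Fin k → V} {x : V} :
    (∀ i j, B ((Fin.snoc g x : Fin (k + 1) → V) i) ((Fin.snoc g x : Fin (k + 1) → V) j) = 0) ↔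
      (∀ i j, B (g i) (g j) = 0) ∧ x ∈ B.orthogonal (span K (Set.range g)) := by
  simp only [Fin.forall_fin_succ', Fin.snoc_castSucc, Fin.snoc_last, hB.self_eq_zero,
    mem_orthogonal_span_iff, Set.forall_mem_range, hB.eq_iff (x := x), forall_and, and_true]
  tauto

theorem snoc_mem_isotropicFrames_iff (hB : B.IsAlt) {k : ℕ} {g : Fin k → V} {x : V} :
    (Fin.snoc g x : Fin (k + 1) → V) ∈ B.isotropicFrames (k + 1) ↔
      g ∈ B.isotropicFrames k ∧
        x ∈ (B.orthogonal (span K (Set.range g)) : Set V) \ span K (Set.range g) := by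
  simp only [isotropicFrames, Set.mem_ofPred_eq, linearIndependent_finSnoc, isotropic_snoc_iff hB,
    Set.mem_sdiff, SetLike.mem_coe]
  tauto

def isotropicFramesSnocEquiv (hB : B.IsAlt) (k : ℕ) :
    B.isotropicFrames (k + 1) ≃ Σ g : B.isotropicFrames k,
      ↥((B.orthogonal (span K (Set.range g.1)) : Set V) \ span K (Set.range g.1)) where
  toFun f :=
    let h := (snoc_mem_isotropicFrames_iff hB).1 ((Fin.snoc_init_self f.1).symm ▸ f.2)
    ⟨⟨_, h.1⟩, _, h.2⟩
  invFun p := ⟨Fin.snoc p.1.1 p.2.1, (snoc_mem_isotropicFrames_iff hB).2 ⟨p.1.2, p.2.2⟩⟩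
  left_inv f := Subtype.ext (Fin.snoc_init_self f.1)
  right_inv _ := Sigma.subtype_ext (Subtype.ext (Fin.init_snoc (α := fun _ => V) ..))
    (Fin.snoc_last (α := fun _ => V) ..)

theorem isotropic_span_le_orthogonal {k : ℕ} {g : Fin k → V} (hg : ∀ i j, B (g i) (g j) = 0) :
    span K (Set.range g) ≤ B.orthogonal (span K (Set.range g)) := fun y hy x hx =>
  (B.isotropic_span_iff.2 (by simpa only [Set.forall_mem_range] using hg)) x hx y hy

variable [Fintype K] [Finite V]

local notation "q" => Fintype.card K

theorem card_isotropicFrames (hB : B.IsAlt) (hB' : B.Nondegenerate) (k : ℕ) :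
    Nat.card (B.isotropicFrames k) =
      ∏ a ∈ Finset.range k, (q ^ (finrank K V - a) - q ^ a) := by
  induction k with
  | zero =>
    rw [Finset.prod_range_zero, Nat.card_eq_one_iff_exists]
    exact ⟨⟨finZeroElim, linearIndependent_empty_type, finZeroElim⟩,
      fun _ => Subtype.ext (Subsingleton.elim _ _)⟩
  | succ k ih =>
    have hfiber (g : B.isotropicFrames k) :
        Nat.card ↥((B.orthogonal (span K (Set.range g.1)) : Set V) \ span K (Set.range g.1)) =
          q ^ (finrank K V - k) - q ^ k := by
      rw [natCard_sdiff_of_le (isotropic_span_le_orthogonal g.2.2), finrank_orthogonal hB',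
        finrank_span_eq_card g.2.1, Fintype.card_fin]
    rw [Nat.card_congr (isotropicFramesSnocEquiv hB k), Nat.card_sigma_of_forall_card_eq hfiber,
      ih, Finset.prod_range_succ]

theorem card_isotropicFrames_eq_mul (k : ℕ) :
    Nat.card (B.isotropicFrames k) =
      Nat.card {S : Submodule K V // finrank K S = k ∧ ∀ x ∈ S, ∀ y ∈ S, B x y = 0} *
        ∏ a ∈ Finset.range k, (q ^ k - q ^ a) := by
  refine (Nat.card_congr (Equiv.subtypeEquivRight fun f => and_congr_right' ?_)).trans
    (card_linearIndependent_span_mem {S | ∀ x ∈ S, ∀ y ∈ S, B x y = 0} k)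
  simp only [Set.mem_ofPred_eq, isotropic_span_iff, Set.forall_mem_range]

theorem card_isotropic_submodule_mul (hB : B.IsAlt) (hB' : B.Nondegenerate) (k : ℕ) :
    Nat.card {S : Submodule K V // finrank K S = k ∧ ∀ x ∈ S, ∀ y ∈ S, B x y = 0} *
        ∏ a ∈ Finset.range k, (q ^ k - q ^ a) =
      ∏ a ∈ Finset.range k, (q ^ (finrank K V - a) - q ^ a) := by
  rw [← card_isotropicFrames_eq_mul, card_isotropicFrames hB hB']

end Field

end LinearMap.BilinForm

noncomputable def sympForm (n : ℕ) : BilinForm (ZMod 2) ((Fin n → ZMod 2) × (Fin n → ZMod 2)) :=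
  let D := (dotProductBilin (ZMod 2) (ZMod 2)).compl₁₂ (LinearMap.fst (ZMod 2) _ _)
    (LinearMap.snd (ZMod 2) _ _)
  D + D.flip

theorem sympForm_apply {n : ℕ} (x y : (Fin n → ZMod 2) × (Fin n → ZMod 2)) :
    sympForm n x y = symp x y := rfl

theorem sympForm_isAlt (n : ℕ) : (sympForm n).IsAlt := fun _ => CharTwo.add_self_eq_zero _

theorem sympForm_nondegenerate (n : ℕ) : (sympForm n).Nondegenerate := by
  refine (sympForm_isAlt n).isRefl.nondegenerate_iff_separatingLeft.2 fun x hx => ?_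
  have h1 (i : Fin n) : x.1 i = 0 := by
    simpa [sympForm_apply, symp, Pi.single_apply] using hx (0, Pi.single i 1)
  have h2 (i : Fin n) : x.2 i = 0 := by
    simpa [sympForm_apply, symp, Pi.single_apply] using hx (Pi.single i 1, 0)
  exact Prod.ext (funext h1) (funext h2)

theorem stmt_16_general (n m : ℕ) :
    Nat.card {S : Submodule (ZMod 2) ((Fin n → ZMod 2) × (Fin n → ZMod 2)) //
        Module.finrank (ZMod 2) S = m ∧ ∀ x ∈ S, ∀ y ∈ S, symp x y = 0} *
      ∏ a ∈ Finset.range m, (2 ^ m - 2 ^ a) =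
      ∏ a ∈ Finset.range m, (2 ^ (2 * n - a) - 2 ^ a) := by
  have h := (sympForm n).card_isotropic_submodule_mul (sympForm_isAlt n)
    (sympForm_nondegenerate n) m
  rwa [ZMod.card, finrank_prod, finrank_fin_fun, ← two_mul] at h

theorem stmt_16 (n m : ℕ) (hm : m ≤ n) :
    Nat.card {S : Submodule (ZMod 2) ((Fin n → ZMod 2) × (Fin n → ZMod 2)) //
        Module.finrank (ZMod 2) S = m ∧ ∀ x ∈ S, ∀ y ∈ S, symp x y = 0} *
      ∏ a ∈ Finset.range m, (2 ^ m - 2 ^ a) =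
      ∏ a ∈ Finset.range m, (2 ^ (2 * n - a) - 2 ^ a) :=
  stmt_16_general n m
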